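/- arXiv:math/0404008 — 6 statements merged into one kernel-verified Lean document; each statement's English description precedes it below -/
import Mathlib

section
/- For every i ∈ ℕ₀ one has D₁(z_i) = 0. -/
noncomputable section

variable {k : Type*} [Field k]

/-- The algebra endomorphism of the free algebra on two generators with
`x1 ↦ a • x1`, `x2 ↦ b • x2`. -/
def alph (a b : k) : FreeAlgebra k (Fin 2) →ₐ[k] FreeAlgebra k (Fin 2) :=
  FreeAlgebra.lift k ![a • FreeAlgebra.ι k 0, b • FreeAlgebra.ι k 1]

/-- The elements `z_i`, defined by `z_0 = x2`, `z_{i+1} = x1·z_i − q11^i·q12·z_i·x1`. -/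
def zz (q11 q12 : k) : ℕ → FreeAlgebra k (Fin 2)
  | 0 => FreeAlgebra.ι k 1
  | (i + 1) => FreeAlgebra.ι k 0 * zz q11 q12 i
      - (q11 ^ i * q12) • (zz q11 q12 i * FreeAlgebra.ι k 0)

/-- The elements `u_i`, defined by `u_0 = x1`, `u_{i+1} = u_i·x2 − q12·q22^i·x2·u_i`. -/
def uu (q12 q22 : k) : ℕ → FreeAlgebra k (Fin 2)
  | 0 => FreeAlgebra.ι k 0
  | (i + 1) => uu q12 q22 i * FreeAlgebra.ι k 1
      - (q12 * q22 ^ i) • (FreeAlgebra.ι k 1 * uu q12 q22 i)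

/-- The q-number `[m]_p = 1 + p + ⋯ + p^{m-1}`. -/
def qnum (p : k) (m : ℕ) : k := ∑ j ∈ Finset.range m, p ^ j

/-- The q-factorial `[m]!_p = [1]_p·[2]_p⋯[m]_p`. -/
def qfact (p : k) (m : ℕ) : k := ∏ l ∈ Finset.range m, qnum p (l + 1)

/-- `b_i = ∏_{j=0}^{i-1} (1 − q11^j·q12·q21)`. -/
def bb (q11 q12 q21 : k) (i : ℕ) : k :=
  ∏ j ∈ Finset.range i, (1 - q11 ^ j * q12 * q21)

/-- `c_i = q21^{-i}·b_i·[i]!_{q11⁻¹}`. -/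
def cc (q11 q12 q21 : k) (i : ℕ) : k :=
  q21⁻¹ ^ i * bb q11 q12 q21 i * qfact q11⁻¹ i

/-- `d_{i,0}`. -/
def dd (q11 q12 q21 q22 : k) (i : ℕ) : k :=
  q21⁻¹ * (1 - q11 ^ i * q12 * q21) * qnum q11⁻¹ (i + 1)
    + (q11 ^ (i * (i + 1)) * q12 ^ i * q21 ^ (i + 1) * q22)⁻¹
    - q11 ^ (i * (i + 1)) * q12 ^ (i + 1) * q21 ^ i * q22

/-! Induction on `i`: if `D₁ z_i = 0`, then `D₁ (x₁ z_i) = z_i` and `D₁ (z_i x₁) = α₁ z_i`, and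
`z_i` is an eigenvector of `α₁` with eigenvalue `(q11^i q12)⁻¹`, exactly cancelling the coefficient
in `z_{i+1} = x₁ z_i − q11^i q12 z_i x₁`. -/

theorem alph_ι_zero (a b : k) : alph a b (FreeAlgebra.ι k 0) = a • FreeAlgebra.ι k 0 := by
  simp [alph]

theorem alph_ι_one (a b : k) : alph a b (FreeAlgebra.ι k 1) = b • FreeAlgebra.ι k 1 := by
  simp [alph]

theorem alph_inv_zz (q11 q12 : k) (i : ℕ) :
    alph q11⁻¹ q12⁻¹ (zz q11 q12 i) = (q11 ^ i * q12)⁻¹ • zz q11 q12 i := by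
  induction i with
  | zero => simp [zz, alph_ι_one]
  | succ n ih =>
    simp only [zz, map_sub, map_mul, map_smul, ih, alph_ι_zero, smul_mul_assoc,
      mul_smul_comm, smul_sub, smul_smul]
    match_scalars <;> ring

theorem map_mul_sub_smul_mul_eq_zero {A : Type*} [Ring A] [Algebra k A] (D : A →ₗ[k] A)
    (α : A → A) (hD : ∀ a b, D (a * b) = D a * b + α a * D b) {x a : A} {c : k} (hc : c ≠ 0)
    (hx : D x = 1) (ha : D a = 0) (hαa : α a = c⁻¹ • a) :
    D (x * a - c • (a * x)) = 0 := by
  rw [map_sub, map_smul, hD, hD, hx, ha, hαa]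
  simp [smul_smul, mul_inv_cancel₀ hc]

theorem D1_z_eq_zero_general
    (q11 q12 : k)
    (hq11 : q11 ≠ 0) (hq12 : q12 ≠ 0)
    (D1 : FreeAlgebra k (Fin 2) →ₗ[k] FreeAlgebra k (Fin 2))
    (hD1x1 : D1 (FreeAlgebra.ι k 0) = 1)
    (hD1x2 : D1 (FreeAlgebra.ι k 1) = 0)
    (hD1mul : ∀ a b : FreeAlgebra k (Fin 2),
      D1 (a * b) = D1 a * b + alph q11⁻¹ q12⁻¹ a * D1 b)
 :
    ∀ i : ℕ, D1 (zz q11 q12 i) = 0 := by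
  intro i
  induction i with
  | zero => exact hD1x2
  | succ n ih =>
    exact map_mul_sub_smul_mul_eq_zero D1 _ hD1mul (mul_ne_zero (pow_ne_zero n hq11) hq12)
      hD1x1 ih (alph_inv_zz q11 q12 n)

theorem D1_z_eq_zero
    (q11 q12 q21 q22 : k)
    (hq11 : q11 ≠ 0) (hq12 : q12 ≠ 0) (hq21 : q21 ≠ 0) (hq22 : q22 ≠ 0)
    (D1 : FreeAlgebra k (Fin 2) →ₗ[k] FreeAlgebra k (Fin 2))
    (hD1one : D1 1 = 0)
    (hD1x1 : D1 (FreeAlgebra.ι k 0) = 1)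
    (hD1x2 : D1 (FreeAlgebra.ι k 1) = 0)
    (hD1mul : ∀ a b : FreeAlgebra k (Fin 2),
      D1 (a * b) = D1 a * b + alph q11⁻¹ q12⁻¹ a * D1 b)
 :
    ∀ i : ℕ, D1 (zz q11 q12 i) = 0 :=
  D1_z_eq_zero_general q11 q12 hq11 hq12 D1 hD1x1 hD1x2 hD1mul
end
end

section
/- For every i ∈ ℕ₀ one has D₂(z_i) = q21^{-i}·b_i·x1^i, where b_0 := 1 and b_i := ∏_{j=0}^{i-1}(1 − q11^j·q12·q21). -/
noncomputable section

variable {k : Type*} [Field k]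

/-!
Since `D₂(x₁) = 0` and `α₂(x₁) = q21⁻¹·x₁`, the skew Leibniz rule gives
`D₂(x₁·z − c·z·x₁) = q21⁻¹·x₁·D₂(z) − c·D₂(z)·x₁`. So if `D₂(z_i)` is a multiple of `x₁^i`,
then `D₂(z_{i+1})` is `(q21⁻¹ − q11^i·q12) = q21⁻¹·(1 − q11^i·q12·q21)` times that multiple,
times `x₁^{i+1}`.
-/

section SkewDerivation

variable {R A : Type*} [CommRing R] [Ring A] [Algebra R A]

theorem map_mul_sub_smul_mul_of_map_eq_zero {D : A →ₗ[R] A} {σ : A → A}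
    (hD : ∀ a b, D (a * b) = D a * b + σ a * D b) {x : A} {μ : R}
    (hx : D x = 0) (hσx : σ x = μ • x) (c β : R) {z : A} {n : ℕ} (hz : D z = β • x ^ n) :
    D (x * z - c • (z * x)) = ((μ - c) * β) • x ^ (n + 1) := by
  rw [map_sub, map_smul, hD, hD, hx, hσx, hz, zero_mul, mul_zero, add_zero, zero_add,
    smul_mul_smul_comm, smul_mul_assoc, smul_smul, ← pow_succ', ← pow_succ, ← sub_smul, sub_mul]

end SkewDerivation

theorem bb_succ (q11 q12 q21 : k) (i : ℕ) :
    bb q11 q12 q21 (i + 1) = bb q11 q12 q21 i * (1 - q11 ^ i * q12 * q21) :=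
  Finset.prod_range_succ _ _

theorem inv_pow_succ_mul_bb_succ {q21 : k} (hq21 : q21 ≠ 0) (q11 q12 : k) (i : ℕ) :
    q21⁻¹ ^ (i + 1) * bb q11 q12 q21 (i + 1)
      = (q21⁻¹ - q11 ^ i * q12) * (q21⁻¹ ^ i * bb q11 q12 q21 i) := by
  have hfactor : q21⁻¹ * (1 - q11 ^ i * q12 * q21) = q21⁻¹ - q11 ^ i * q12 := by
    field_simp
  rw [bb_succ, ← hfactor]
  ring

theorem D2_z_eq_general
    (q11 q12 q21 q22 : k)
    (hq21 : q21 ≠ 0)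
    (D2 : FreeAlgebra k (Fin 2) →ₗ[k] FreeAlgebra k (Fin 2))
    (hD2x1 : D2 (FreeAlgebra.ι k 0) = 0)
    (hD2x2 : D2 (FreeAlgebra.ι k 1) = 1)
    (hD2mul : ∀ a b : FreeAlgebra k (Fin 2),
      D2 (a * b) = D2 a * b + alph q21⁻¹ q22⁻¹ a * D2 b)
 :
    ∀ i : ℕ, D2 (zz q11 q12 i)
      = (q21⁻¹ ^ i * bb q11 q12 q21 i) • ((FreeAlgebra.ι k 0 : FreeAlgebra k (Fin 2)) ^ i) := by
  intro i
  induction i with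
  | zero => simp [zz, bb, hD2x2]
  | succ i ih =>
    rw [zz, map_mul_sub_smul_mul_of_map_eq_zero hD2mul hD2x1 (alph_ι_zero _ _) _ _ ih,
      inv_pow_succ_mul_bb_succ hq21]

theorem D2_z_eq
    (q11 q12 q21 q22 : k)
    (hq11 : q11 ≠ 0) (hq12 : q12 ≠ 0) (hq21 : q21 ≠ 0) (hq22 : q22 ≠ 0)
    (D1 : FreeAlgebra k (Fin 2) →ₗ[k] FreeAlgebra k (Fin 2))
    (hD1one : D1 1 = 0)
    (hD1x1 : D1 (FreeAlgebra.ι k 0) = 1)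
    (hD1x2 : D1 (FreeAlgebra.ι k 1) = 0)
    (hD1mul : ∀ a b : FreeAlgebra k (Fin 2),
      D1 (a * b) = D1 a * b + alph q11⁻¹ q12⁻¹ a * D1 b)
    (D2 : FreeAlgebra k (Fin 2) →ₗ[k] FreeAlgebra k (Fin 2))
    (hD2one : D2 1 = 0)
    (hD2x1 : D2 (FreeAlgebra.ι k 0) = 0)
    (hD2x2 : D2 (FreeAlgebra.ι k 1) = 1)
    (hD2mul : ∀ a b : FreeAlgebra k (Fin 2),
      D2 (a * b) = D2 a * b + alph q21⁻¹ q22⁻¹ a * D2 b)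
 :
    ∀ i : ℕ, D2 (zz q11 q12 i)
      = (q21⁻¹ ^ i * bb q11 q12 q21 i) • ((FreeAlgebra.ι k 0 : FreeAlgebra k (Fin 2)) ^ i) :=
  D2_z_eq_general q11 q12 q21 q22 hq21 D2 hD2x1 hD2x2 hD2mul
end
end

section
/- Let a ≥ 3 be an integer, let q ∈ k be a primitive (a+2)-th root of unity, and let t ∈ k be nonzero with q·t^{a+1} = 1 and 1 − q·t + (q·t)² = 0. Then a = 10 and t^{12} = 1; in particular t^{a+2} = 1. -/
theorem roots_of_unity_case_a10
    {k : Type*} [Field k] [CharZero k] (a : ℕ) (ha : 3 ≤ a) (q t : k)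
    (hq : IsPrimitiveRoot q (a + 2)) (ht : t ≠ 0)
    (h1 : q * t ^ (a + 1) = 1) (h2 : 1 - q * t + (q * t) ^ 2 = 0) :
    a = 10 ∧ t ^ 12 = 1 ∧ t ^ (a + 2) = 1 := by
  have hζ3 : (q * t) ^ 3 = -1 := by linear_combination (q * t + 1) * h2
  have h6 : (q * t) ^ 6 = 1 := by
    rw [show (6 : ℕ) = 3 * 2 from rfl, pow_mul, hζ3]; ring
  have hqn : q ^ (a + 2) = 1 := hq.pow_eq_one
  have hkey : q ^ 2 * (q * t) ^ (a + 1) = 1 := by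
    have : q ^ 2 * (q * t) ^ (a + 1) = q ^ (a + 2) * (q * t ^ (a + 1)) := by
      rw [mul_pow]; ring
    rw [this, hqn, h1, one_mul]
  have hA : ((q * t) ^ (a + 1)) ^ 6 = 1 := by
    rw [← pow_mul, mul_comm (a + 1) 6, pow_mul, h6, one_pow]
  have hq12 : q ^ 12 = 1 := by
    have hc : q ^ 12 * ((q * t) ^ (a + 1)) ^ 6 = 1 := by
      have : q ^ 12 * ((q * t) ^ (a + 1)) ^ 6 = (q ^ 2 * (q * t) ^ (a + 1)) ^ 6 := by
        rw [mul_pow]; ring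
      rw [this, hkey, one_pow]
    rwa [hA, mul_one] at hc
  have hdvd : (a + 2) ∣ 12 := hq.dvd_of_pow_eq_one 12 hq12
  have hle : a + 2 ≤ 12 := Nat.le_of_dvd (by norm_num) hdvd
  have hle' : a ≤ 10 := by omega
  have hcase : a = 4 ∨ a = 10 := by
    interval_cases a <;> first
      | (left; rfl)
      | (right; rfl)
      | (exfalso; revert hdvd; decide)
  rcases hcase with rfl | rfl
  · exfalso
    have hc : (q ^ 2 * (q * t) ^ (4 + 1)) ^ 3 = 1 := by rw [hkey]; norm_num
    have hd : q ^ (4 + 2) * ((q * t) ^ 3) ^ 5 = 1 := by rw [← hc]; ring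
    rw [hζ3, hqn] at hd
    norm_num at hd
  · have ht12 : t ^ 12 = 1 := by
      have h12 : (q * t) ^ 12 = 1 := by
        rw [show (12 : ℕ) = 6 * 2 from rfl, pow_mul, h6, one_pow]
      rwa [mul_pow, hq12, one_mul] at h12
    exact ⟨rfl, ht12, ht12⟩
end

section
/- Let q be a nonzero element of a field k, let a ≥ 1 be an integer, and suppose q^{2a} − q^a + 1 = 0. Then q^{-2} + q^{1-a} + q^{-a} − q^{2-2a} − q^{1-2a} − q^{-2a} + q^{2-3a} + q^{1-3a} + q^{4-4a} = q^{-2}·(1 + q²)·(1 − q^{4-a}). -/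
theorem laurent_identity_case2
    {k : Type*} [Field k] (q : k) (hq : q ≠ 0) (a : ℤ) (ha : 1 ≤ a)
    (h : q ^ (2 * a) - q ^ a + 1 = 0) :
    q ^ (-2 : ℤ) + q ^ (1 - a) + q ^ (-a) - q ^ (2 - 2 * a) - q ^ (1 - 2 * a)
        - q ^ (-(2 * a)) + q ^ (2 - 3 * a) + q ^ (1 - 3 * a) + q ^ (4 - 4 * a)
      = q ^ (-2 : ℤ) * (1 + q ^ 2) * (1 - q ^ (4 - a)) := by
  have hu : q ^ a ≠ 0 := zpow_ne_zero _ hq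
  simp only [show (2:ℤ)*a = a+a from by ring, show (3:ℤ)*a = a+a+a from by ring,
    show (4:ℤ)*a = a+a+a+a from by ring, sub_eq_add_neg, neg_add, zpow_add₀ hq,
    zpow_neg, zpow_one] at h ⊢
  have hinv : (q ^ a)⁻¹ = 1 - q ^ a := by
    field_simp
    linear_combination h
  simp only [hinv]
  have hq2 : (q:k) ^ (2:ℤ) = q ^ (2:ℕ) := by norm_cast
  have hq4 : (q:k) ^ (4:ℤ) = q ^ (4:ℕ) := by norm_cast
  rw [hq2, hq4]
  field_simp
  linear_combination (q^6*(q^a)^2 - (q^3+q^4+3*q^6)*(q^a) - q^2 + q^3 + 2*q^6 + q^4) * h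
end

section
/- Let a ≥ 3 be an integer, let q ∈ k be a primitive (a+2)-th root of unity, and let t ∈ k be nonzero with t^{a+2} ≠ 1, q·t^{a+1} = 1 and q³·t² = −1. Then a = 3, t is a primitive 20-th root of unity, and q = t^{-4}. -/
theorem roots_of_unity_case_R20
    {k : Type*} [Field k] [CharZero k] (a : ℕ) (ha : 3 ≤ a) (q t : k)
    (hq : IsPrimitiveRoot q (a + 2)) (ht : t ≠ 0) (ht2 : t ^ (a + 2) ≠ 1)
    (h1 : q * t ^ (a + 1) = 1) (h2 : q ^ 3 * t ^ 2 = -1) :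
    a = 3 ∧ IsPrimitiveRoot t 20 ∧ q = (t ^ 4)⁻¹ := by
  have hq0 : q ≠ 0 := hq.ne_zero (by omega)
  have hqpow : q ^ (a + 2) = 1 := hq.pow_eq_one
  obtain ⟨u, hu⟩ : ∃ u : k, u = t ^ (a + 2) := ⟨_, rfl⟩
  have hu0 : u ≠ 0 := hu ▸ pow_ne_zero _ ht
  have hu1 : u ≠ 1 := hu ▸ ht2
  have htqu : t = q * u := by
    have h3 : q * u = (q * t ^ (a + 1)) * t := by rw [hu, pow_succ]; ring
    rw [h3, h1, one_mul]
  -- u^(a+1) = 1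
  have hua : u ^ (a + 1) = 1 := by
    have h4 : u = u ^ (a + 2) := by
      calc u = t ^ (a + 2) := hu
      _ = (q * u) ^ (a + 2) := by rw [← htqu]
      _ = q ^ (a + 2) * u ^ (a + 2) := mul_pow _ _ _
      _ = u ^ (a + 2) := by rw [hqpow, one_mul]
    have h5 : u * u ^ (a + 1) = u * 1 := by
      rw [mul_one, ← pow_succ']
      exact h4.symm
    exact mul_left_cancel₀ hu0 h5
  -- q^5 * u^2 = -1
  have h5 : q ^ 5 * u ^ 2 = -1 := by
    rw [htqu] at h2
    calc q ^ 5 * u ^ 2 = q ^ 3 * (q * u) ^ 2 := by ring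
    _ = -1 := h2
  -- q^(5*(a+1)) = (-1)^(a+1)
  have h8 : q ^ (5 * (a + 1)) = (-1 : k) ^ (a + 1) := by
    have h7 : (q ^ 5 * u ^ 2) ^ (a + 1) = (-1 : k) ^ (a + 1) := by rw [h5]
    have hu21 : (u ^ 2) ^ (a + 1) = 1 := by
      rw [← pow_mul, mul_comm, pow_mul, hua, one_pow]
    rw [mul_pow, hu21, mul_one, ← pow_mul] at h7
    exact h7
  -- q^(10*(a+1)) = 1
  have h6 : q ^ (10 * (a + 1)) = 1 := by
    rw [show 10 * (a + 1) = 5 * (a + 1) * 2 by ring, pow_mul, h8, ← pow_mul,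
      mul_comm, pow_mul, neg_one_sq, one_pow]
  have hdvd : (a + 2) ∣ 10 * (a + 1) := (hq.pow_eq_one_iff_dvd _).mp h6
  have hcop : Nat.Coprime (a + 2) (a + 1) :=
    Nat.coprime_self_add_left.mpr (Nat.coprime_one_left _)
  have hdvd10 : (a + 2) ∣ 10 := (Nat.Coprime.dvd_of_dvd_mul_right hcop) hdvd
  have hle : a ≤ 8 := by
    have := Nat.le_of_dvd (by norm_num) hdvd10; omega
  have ha3 : a = 3 := by
    interval_cases a
    · rfl
    · exfalso; omega
    · exfalso; omega
    · exfalso; omega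
    · exfalso; omega
    · -- a = 8 : contradiction
      exfalso
      norm_num at hqpow hua h8
      have hq5 : q ^ 5 = -1 := by
        have h9 : q ^ 45 = q ^ 5 := by
          calc q ^ 45 = (q ^ 10) ^ 4 * q ^ 5 := by ring
          _ = q ^ 5 := by rw [hqpow]; ring
        rw [h9] at h8
        simpa using h8
      have hu2 : u ^ 2 = 1 := by
        linear_combination (-1 : k) * h5 + u ^ 2 * hq5
      have : u = 1 := by
        linear_combination hua - (u ^ 7 + u ^ 5 + u ^ 3 + u) * hu2
      exact hu1 this
  subst ha3
  norm_num at hqpow hua ht2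
  -- now a = 3 : q^5 = 1, u^4 = 1, u^2 = -1
  have hu2 : u ^ 2 = -1 := by
    linear_combination h5 - u ^ 2 * hqpow
  have ht4 : t ^ 4 = q ^ 4 := by
    rw [htqu, mul_pow, hua, mul_one]
  have hqt4 : q = (t ^ 4)⁻¹ := by
    rw [ht4]
    refine eq_inv_of_mul_eq_one_left ?_
    linear_combination hqpow
  refine ⟨rfl, ?_, hqt4⟩
  have ht5 : t ^ 5 = u := by
    rw [htqu, mul_pow, hqpow, one_mul, pow_succ, hua, one_mul]
  have ht20 : t ^ 20 = 1 := by
    calc t ^ 20 = (t ^ 5) ^ 4 := by ring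
    _ = 1 := by rw [ht5, hua]
  have ht10 : t ^ 10 = -1 := by
    calc t ^ 10 = (t ^ 5) ^ 2 := by ring
    _ = -1 := by rw [ht5, hu2]
  have ht4ne : t ^ 4 ≠ 1 := by
    rw [ht4]
    intro h
    have hq1 : q = 1 := by linear_combination hqpow - q * h
    exact hq.ne_one (by norm_num) hq1
  have hn : orderOf t ∣ 20 := orderOf_dvd_of_pow_eq_one ht20
  have hn10 : ¬ orderOf t ∣ 10 := by
    intro h
    have := orderOf_dvd_iff_pow_eq_one.mp h
    rw [ht10] at this
    exact (by norm_num : (-1 : k) ≠ 1) this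
  have hn4 : ¬ orderOf t ∣ 4 := fun h => ht4ne (orderOf_dvd_iff_pow_eq_one.mp h)
  have hnpos : 0 < orderOf t := Nat.pos_of_dvd_of_pos hn (by norm_num)
  have hn20 : orderOf t = 20 := by
    have hle : orderOf t ≤ 20 := Nat.le_of_dvd (by norm_num) hn
    interval_cases h : orderOf t <;> omega
  have := IsPrimitiveRoot.orderOf t
  rwa [hn20] at this
end

section
/- Let a ≥ 3 be an integer, let q ∈ k be a primitive (a+2)-th root of unity, and let t ∈ k be nonzero with t^{a+2} ≠ 1, t^a = −q^{-1} and 1 − q²·t + q⁴·t² = 0. Then either a = 3, t is a primitive 30-th root of unity and q = −t^{-3}, or a = 13, t is a primitive 30-th root of unity and q = t². -/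
theorem roots_of_unity_case_R30
    {k : Type*} [Field k] [CharZero k] (a : ℕ) (ha : 3 ≤ a) (q t : k)
    (hq : IsPrimitiveRoot q (a + 2)) (ht : t ≠ 0) (ht2 : t ^ (a + 2) ≠ 1)
    (h1 : t ^ a = -q⁻¹) (h2 : 1 - q ^ 2 * t + q ^ 4 * t ^ 2 = 0) :
    (a = 3 ∧ IsPrimitiveRoot t 30 ∧ q = -(t ^ 3)⁻¹) ∨
    (a = 13 ∧ IsPrimitiveRoot t 30 ∧ q = t ^ 2) := by
  have hq0 : q ≠ 0 := hq.ne_zero (by omega)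
  obtain ⟨p, hp⟩ : ∃ p, p = q ^ 2 * t := ⟨_, rfl⟩
  have h2' : 1 - p + p ^ 2 = 0 := by rw [hp]; linear_combination h2
  have hp3 : p ^ 3 = -1 := by linear_combination (p + 1) * h2'
  have hp6 : p ^ 6 = 1 := by
    calc p ^ 6 = (p ^ 3) ^ 2 := by ring
    _ = 1 := by rw [hp3]; ring
  -- p has exact order 6
  have hpdvd : ∀ l : ℕ, p ^ l = 1 → 6 ∣ l := by
    intro l hl
    rw [← Nat.div_add_mod l 6, pow_add, pow_mul, hp6, one_pow, one_mul] at hl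
    obtain ⟨r, hrdef, hrlt⟩ : ∃ r, l % 6 = r ∧ r < 6 :=
      ⟨l % 6, rfl, Nat.mod_lt _ (by norm_num)⟩
    rw [hrdef] at hl
    interval_cases r
    · omega
    · exfalso
      have : (1 : k) = 0 := by linear_combination h2' - p * hl
      exact one_ne_zero this
    · exfalso
      have hp2 : p = 2 := by linear_combination hl - h2'
      rw [hp2] at hp3; norm_num at hp3
    · exfalso
      rw [hp3] at hl; norm_num at hl
    · exfalso
      have hpm1 : p = -1 := by linear_combination p * hp3 - hl
      rw [hpm1] at h2'; norm_num at h2'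
    · exfalso
      have hp0' : p = 0 := by linear_combination p ^ 2 * hp3 - hl - h2'
      rw [hp0'] at hp3; norm_num at hp3
  have key : ∀ n : ℕ, t ^ n * q ^ (2 * n) = p ^ n := by
    intro n; rw [hp]; ring
  have hpa : p ^ a * q = -(q ^ (2 * a)) := by
    rw [hp]
    calc (q ^ 2 * t) ^ a * q = q ^ (2 * a) * t ^ a * q := by ring
    _ = q ^ (2 * a) * (-q⁻¹) * q := by rw [h1]
    _ = -(q ^ (2 * a)) := by field_simp
  have hqa2 : q ^ (a + 2) = 1 := hq.pow_eq_one
  have e2 : q ^ (12 * a) = q ^ 6 := by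
    have h := congrArg (· ^ 6) hpa
    calc q ^ (12 * a) = (-(q ^ (2 * a))) ^ 6 := by ring
    _ = (p ^ a * q) ^ 6 := h.symm
    _ = (p ^ 6) ^ a * q ^ 6 := by ring
    _ = q ^ 6 := by rw [hp6]; ring
  have h30 : q ^ 30 = 1 := by
    have c1 : q ^ (12 * a) * q ^ 24 = 1 := by
      calc q ^ (12 * a) * q ^ 24 = (q ^ (a + 2)) ^ 12 := by ring
      _ = 1 := by rw [hqa2, one_pow]
    calc q ^ 30 = q ^ 6 * q ^ 24 := by ring
    _ = q ^ (12 * a) * q ^ 24 := by rw [e2]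
    _ = 1 := c1
  have hdvd : (a + 2) ∣ 30 := hq.dvd_of_pow_eq_one 30 h30
  have hle : a ≤ 28 := by
    have := Nat.le_of_dvd (by norm_num) hdvd; omega
  interval_cases a <;>
    first
    | exact absurd hdvd (by decide)
    | skip
  -- a = 3
  · left
    have hq5 : q ^ 5 = 1 := by norm_num at hqa2; exact hqa2
    refine ⟨rfl, ⟨?_, ?_⟩, ?_⟩
    · -- t ^ 30 = 1
      have k30 := key 30
      norm_num at k30
      have hq60 : q ^ 60 = 1 := by
        have e : q ^ 60 = (q ^ 5) ^ 12 := by ring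
        rw [e, hq5, one_pow]
      have hp30 : p ^ 30 = 1 := by
        have e : p ^ 30 = (p ^ 6) ^ 5 := by ring
        rw [e, hp6, one_pow]
      rw [hq60, hp30, mul_one] at k30
      exact k30
    · intro l hl
      have kl := key l
      rw [hl, one_mul] at kl
      have h5l : p ^ (5 * l) = 1 := by
        calc p ^ (5 * l) = (p ^ l) ^ 5 := by ring
        _ = (q ^ (2 * l)) ^ 5 := by rw [← kl]
        _ = (q ^ 5) ^ (2 * l) := by ring
        _ = 1 := by rw [hq5, one_pow]
      have h12l : q ^ (12 * l) = 1 := by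
        calc q ^ (12 * l) = (q ^ (2 * l)) ^ 6 := by ring
        _ = (p ^ l) ^ 6 := by rw [kl]
        _ = (p ^ 6) ^ l := by ring
        _ = 1 := by rw [hp6, one_pow]
      have d6 : 6 ∣ 5 * l := hpdvd _ h5l
      have d5 : (3 : ℕ) + 2 ∣ 12 * l := hq.dvd_of_pow_eq_one _ h12l
      omega
    · rw [h1]
      rw [inv_neg, inv_inv, neg_neg]
  -- a = 4
  · exfalso
    have hq6 : q ^ 6 = 1 := by norm_num at hqa2; exact hqa2
    have k6 := key 6
    norm_num at k6
    have hq12 : q ^ 12 = 1 := by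
      have e : q ^ 12 = (q ^ 6) ^ 2 := by ring
      rw [e, hq6, one_pow]
    rw [hp6, hq12, mul_one] at k6
    norm_num at ht2
    exact ht2 k6
  -- a = 8
  · exfalso
    have hq10 : q ^ 10 = 1 := by norm_num at hqa2; exact hqa2
    have hq5ne : q ^ 5 ≠ 1 := by
      intro h
      have := hq.dvd_of_pow_eq_one 5 h
      omega
    have h5 : q ^ 5 = -1 := by
      have hfac : (q ^ 5 - 1) * (q ^ 5 + 1) = 0 := by linear_combination hq10
      rcases mul_eq_zero.mp hfac with h | h
      · exact absurd (by linear_combination h) hq5ne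
      · linear_combination h
    have hpa8 : p ^ 8 * q = -(q ^ 16) := by norm_num at hpa; exact hpa
    have hq16 : q ^ 16 = -q := by
      calc q ^ 16 = q ^ 10 * (q ^ 5 * q) := by ring
      _ = -q := by rw [hq10, h5]; ring
    have hp8 : p ^ 8 = p ^ 2 := by
      calc p ^ 8 = p ^ 6 * p ^ 2 := by ring
      _ = p ^ 2 := by rw [hp6, one_mul]
    rw [hp8, hq16] at hpa8
    have hp2 : p ^ 2 = 1 := by
      have h' : p ^ 2 * q = 1 * q := by rw [one_mul]; linear_combination hpa8
      exact mul_right_cancel₀ hq0 h'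
    have := hpdvd 2 hp2
    omega
  -- a = 13
  · right
    have hq15 : q ^ 15 = 1 := by norm_num at hqa2; exact hqa2
    have hpa13 : p ^ 13 * q = -(q ^ 26) := by norm_num at hpa; exact hpa
    have hp13 : p ^ 13 = p := by
      calc p ^ 13 = (p ^ 6) ^ 2 * p := by ring
      _ = p := by rw [hp6]; ring
    have hq26 : q ^ 26 = q ^ 11 := by
      calc q ^ 26 = q ^ 15 * q ^ 11 := by ring
      _ = q ^ 11 := by rw [hq15, one_mul]
    rw [hp13, hq26] at hpa13
    have ht8 : t = -q ^ 8 := by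
      have h3 : t * q ^ 3 = -q ^ 8 * q ^ 3 := by
        rw [hp] at hpa13
        linear_combination hpa13
      exact mul_right_cancel₀ (pow_ne_zero 3 hq0) h3
    have hqt2 : q = t ^ 2 := by
      rw [ht8]; linear_combination (-q) * hq15
    refine ⟨rfl, ⟨?_, ?_⟩, hqt2⟩
    · rw [ht8]
      calc (-q ^ 8) ^ 30 = (q ^ 15) ^ 16 := by ring
      _ = 1 := by rw [hq15, one_pow]
    · intro l hl
      have hql : q ^ l = 1 := by
        calc q ^ l = (t ^ 2) ^ l := by rw [← hqt2]
        _ = (t ^ l) ^ 2 := by ring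
        _ = 1 := by rw [hl, one_pow]
      obtain ⟨m, rfl⟩ := hq.dvd_of_pow_eq_one l hql
      have ht15 : t ^ 15 = -1 := by
        rw [ht8]
        calc (-q ^ 8) ^ 15 = -(q ^ 15) ^ 8 := by ring
        _ = -1 := by rw [hq15]; ring
      have hm1 : (-1 : k) ^ m = 1 := by
        calc (-1 : k) ^ m = (t ^ 15) ^ m := by rw [ht15]
        _ = t ^ (15 * m) := by ring
        _ = 1 := by norm_num at hl ⊢; exact hl
      have hme : Even m := by
        rcases Nat.even_or_odd m with he | ho
        · exact he
        · exfalso; rw [Odd.neg_one_pow ho] at hm1; norm_num at hm1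
      obtain ⟨c, rfl⟩ := hme
      omega
  -- a = 28
  · exfalso
    have hq30 : q ^ 30 = 1 := by norm_num at hqa2; exact hqa2
    have k30 := key 30
    norm_num at k30
    have hq60 : q ^ 60 = 1 := by
      have e : q ^ 60 = (q ^ 30) ^ 2 := by ring
      rw [e, hq30, one_pow]
    have hp30 : p ^ 30 = 1 := by
      have e : p ^ 30 = (p ^ 6) ^ 5 := by ring
      rw [e, hp6, one_pow]
    rw [hq60, hp30, mul_one] at k30
    norm_num at ht2
    exact ht2 k30
end
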